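/- arXiv:2504.01388 — 8 statements merged into one kernel-verified Lean document; each statement's English description precedes it below -/
import Mathlib

section
/- Every σ-complete Magari algebra is □-founded: if (a_i)_{i∈ℕ} is a sequence of elements with □a_{i+1} ≤ a_i for all i, then a_0 = 1. -/
theorem sigma_complete_magari_box_founded {A : Type*} [BooleanAlgebra A] (box : A → A)
    (hbox_top : box ⊤ = ⊤)
    (hbox_meet : ∀ x y : A, box (x ⊓ y) = box x ⊓ box y)
    (hbox_loeb : ∀ x : A, box (box x ⇨ x) = box x)
    (hsigma : ∀ S : Set A, S.Countable → ∃ g : A, IsGLB S g)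
    (a : ℕ → A) (ha : ∀ i : ℕ, box (a (i + 1)) ≤ a i) : a 0 = ⊤ := by
  have hmono : ∀ x y : A, x ≤ y → box x ≤ box y := by
    intro x y hxy
    have : box (x ⊓ y) = box x := by rw [inf_eq_left.mpr hxy]
    calc box x = box x ⊓ box y := by rw [← hbox_meet, this]
      _ ≤ box y := inf_le_right
  obtain ⟨g, hg⟩ := hsigma (Set.range a) (Set.countable_range a)
  have hgle : ∀ i, g ≤ a i := fun i => hg.1 ⟨i, rfl⟩
  have hboxg : ∀ i, box g ≤ a i := fun i =>
    le_trans (hmono _ _ (hgle (i + 1))) (ha i)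
  have hbg : box g ≤ g := hg.2 (fun x ⟨i, hi⟩ => hi ▸ hboxg i)
  have : box g = ⊤ := by
    rw [← hbox_loeb g, himp_eq_top_iff.mpr hbg, hbox_top]
  exact top_le_iff.mp (this ▸ hboxg 0)
end

section
/- For any Magari algebra A, the relation ≺ defined by a ≺ b iff □a ≤ b is a strict partial order (irreflexive and transitive) on the set A \ {1}. -/
theorem magari_prec_strict_partial_order {A : Type*} [BooleanAlgebra A] (box : A → A)
    (hbox_top : box ⊤ = ⊤)
    (hbox_meet : ∀ x y : A, box (x ⊓ y) = box x ⊓ box y)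
    (hbox_loeb : ∀ x : A, box (box x ⇨ x) = box x) :
    (∀ a : A, a ≠ ⊤ → ¬ box a ≤ a) ∧
    (∀ a b c : A, a ≠ ⊤ → b ≠ ⊤ → c ≠ ⊤ → box a ≤ b → box b ≤ c → box a ≤ c) := by
  have mono : ∀ u v : A, u ≤ v → box u ≤ box v := by
    intro u v huv
    have : box u = box u ⊓ box v := by
      rw [← hbox_meet, inf_eq_left.mpr huv]
    rw [this]; exact inf_le_right
  have four : ∀ x : A, box x ≤ box (box x) := by
    intro x
    set y := x ⊓ box x with hy
    have hx : x ≤ box y ⇨ y := by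
      rw [le_himp_iff]
      have hby : box y ≤ box x := by
        rw [hy, hbox_meet]; exact inf_le_left
      calc x ⊓ box y ≤ x ⊓ box x := inf_le_inf_left x hby
        _ = y := rfl
    have h1 : box x ≤ box (box y ⇨ y) := mono _ _ hx
    rw [hbox_loeb] at h1
    calc box x ≤ box y := h1
      _ = box x ⊓ box (box x) := by rw [hy, hbox_meet]
      _ ≤ box (box x) := inf_le_right
  constructor
  · intro a ha hle
    apply ha
    have h1 : box a ⇨ a = ⊤ := himp_eq_top_iff.mpr hle
    have h2 : box a = ⊤ := by rw [← hbox_loeb a, h1, hbox_top]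
    exact top_le_iff.mp (h2 ▸ hle)
  · intro a b c _ _ _ hab hbc
    exact le_trans (le_trans (four a) (mono _ _ hab)) hbc
end

section
/- For well-founded sets S₁ and S₂ with their product relation ((b₁,b₂) ≺ (c₁,c₂) iff b₁ ≺₁ c₁ and b₂ ≺₂ c₂), the ordinal height of (a,b) in S₁ × S₂ equals min(ht_{S₁}(a), ht_{S₂}(b)). -/
universe u

theorem rank_prod_eq_min {S₁ S₂ : Type u} {r₁ : S₁ → S₁ → Prop} {r₂ : S₂ → S₂ → Prop}
    (h₁ : WellFounded r₁) (h₂ : WellFounded r₂)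
    (hp : WellFounded (fun p q : S₁ × S₂ => r₁ p.1 q.1 ∧ r₂ p.2 q.2)) (a : S₁) (b : S₂) :
    @IsWellFounded.rank (S₁ × S₂) (fun p q => r₁ p.1 q.1 ∧ r₂ p.2 q.2) ⟨hp⟩ (a, b) =
      min (@IsWellFounded.rank S₁ r₁ ⟨h₁⟩ a) (@IsWellFounded.rank S₂ r₂ ⟨h₂⟩ b) := by
  letI I₁ : IsWellFounded S₁ r₁ := ⟨h₁⟩
  letI I₂ : IsWellFounded S₂ r₂ := ⟨h₂⟩
  letI Ip : IsWellFounded (S₁ × S₂) (fun p q => r₁ p.1 q.1 ∧ r₂ p.2 q.2) := ⟨hp⟩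
  set rp := fun p : S₁ × S₂ =>
    IsWellFounded.rank (fun p q : S₁ × S₂ => r₁ p.1 q.1 ∧ r₂ p.2 q.2) p with hrp
  suffices h : ∀ p : S₁ × S₂, rp p = min (IsWellFounded.rank r₁ p.1) (IsWellFounded.rank r₂ p.2)
    from h (a, b)
  intro p
  induction p using hp.induction with
  | _ p IH =>
    obtain ⟨a, b⟩ := p
    apply le_antisymm
    · rw [hrp]
      beta_reduce
      conv_lhs => rw [IsWellFounded.rank_eq]
      apply Ordinal.iSup_le
      rintro ⟨⟨c, d⟩, hc, hd⟩
      have h0 := IH (c, d) ⟨hc, hd⟩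
      have key : rp (c, d) < IsWellFounded.rank r₁ (a, b).1 ⊓ IsWellFounded.rank r₂ (a, b).2 := by
        rw [h0]
        refine lt_min_iff.mpr ⟨?_, ?_⟩
        · exact lt_of_le_of_lt (min_le_left _ _) (IsWellFounded.rank_lt_of_rel hc)
        · exact lt_of_le_of_lt (min_le_right _ _) (IsWellFounded.rank_lt_of_rel hd)
      exact Order.succ_le_of_lt key
    · -- min ≤ rank of pair
      rcases le_total (IsWellFounded.rank r₁ a) (IsWellFounded.rank r₂ b) with hab | hab
      · rw [min_eq_left hab]
        conv_lhs => rw [IsWellFounded.rank_eq]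
        apply Ordinal.iSup_le
        rintro ⟨c, hc⟩
        have hlt : IsWellFounded.rank r₁ c < IsWellFounded.rank r₂ b :=
          lt_of_lt_of_le (IsWellFounded.rank_lt_of_rel hc) hab
        rw [IsWellFounded.rank_eq (r := r₂), Ordinal.lt_iSup_iff] at hlt
        obtain ⟨⟨d, hd⟩, hcd⟩ := hlt
        have hle : IsWellFounded.rank r₁ c ≤ IsWellFounded.rank r₂ d := Order.lt_succ_iff.mp hcd
        have h2 := IH (c, d) ⟨hc, hd⟩
        have h3 : rp (c, d) < rp (a, b) := IsWellFounded.rank_lt_of_rel ⟨hc, hd⟩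
        rw [h2, min_eq_left hle] at h3
        exact Order.succ_le_of_lt h3
      · rw [min_eq_right hab]
        conv_lhs => rw [IsWellFounded.rank_eq]
        apply Ordinal.iSup_le
        rintro ⟨d, hd⟩
        have hlt : IsWellFounded.rank r₂ d < IsWellFounded.rank r₁ a :=
          lt_of_lt_of_le (IsWellFounded.rank_lt_of_rel hd) hab
        rw [IsWellFounded.rank_eq (r := r₁), Ordinal.lt_iSup_iff] at hlt
        obtain ⟨⟨c, hc⟩, hcd⟩ := hlt
        have hle : IsWellFounded.rank r₂ d ≤ IsWellFounded.rank r₁ c := Order.lt_succ_iff.mp hcd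
        have h2 := IH (c, d) ⟨hc, hd⟩
        have h3 : rp (c, d) < rp (a, b) := IsWellFounded.rank_lt_of_rel ⟨hc, hd⟩
        rw [h2, min_eq_right hle] at h3
        exact Order.succ_le_of_lt h3
end

section
/- In a □-founded Magari algebra A, for elements a and b, the height satisfies ht(a ∧ b) = min(ht(a), ht(b)), where ht(x) denotes the ordinal height of x with respect to the relation a ≺ b iff □a ≤ b on A \ {1}, extended by ht(1) = ∞ (a value greater than all ordinals). -/
universe u

theorem magari_aux {A : Type u} [BooleanAlgebra A] (box : A → A)
    (hbox_meet : ∀ x y : A, box (x ⊓ y) = box x ⊓ box y)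
    (hwf : WellFounded (fun x y : {a : A // a ≠ ⊤} => box x.1 ≤ y.1)) :
    ∀ (o : Ordinal.{u}) (a b : {a : A // a ≠ ⊤}) (hab : a.1 ⊓ b.1 ≠ ⊤),
      @IsWellFounded.rank _ (fun x y : {a : A // a ≠ ⊤} => box x.1 ≤ y.1) ⟨hwf⟩ a = o →
      @IsWellFounded.rank _ (fun x y : {a : A // a ≠ ⊤} => box x.1 ≤ y.1) ⟨hwf⟩ a ≤
        @IsWellFounded.rank _ (fun x y : {a : A // a ≠ ⊤} => box x.1 ≤ y.1) ⟨hwf⟩ b →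
      o ≤ @IsWellFounded.rank _ (fun x y : {a : A // a ≠ ⊤} => box x.1 ≤ y.1) ⟨hwf⟩
        ⟨a.1 ⊓ b.1, hab⟩ := by
  letI : IsWellFounded {a : A // a ≠ ⊤} (fun x y => box x.1 ≤ y.1) := ⟨hwf⟩
  set r : {a : A // a ≠ ⊤} → {a : A // a ≠ ⊤} → Prop := fun x y => box x.1 ≤ y.1 with hr
  intro o
  induction o using Ordinal.induction with
  | _ o IH =>
    intro a b hab ha hle
    subst ha
    rw [IsWellFounded.rank_eq r a]
    apply Ordinal.iSup_le
    rintro ⟨x, hx⟩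
    have hxa : IsWellFounded.rank r x < IsWellFounded.rank r a :=
      IsWellFounded.rank_lt_of_rel hx
    have hxb : IsWellFounded.rank r x < IsWellFounded.rank r b := hxa.trans_le hle
    rw [IsWellFounded.rank_eq r b, Ordinal.lt_iSup_iff] at hxb
    obtain ⟨⟨z, hz⟩, hzx⟩ := hxb
    rw [Order.lt_succ_iff] at hzx
    have hw : (x.1 ⊓ z.1) ≠ ⊤ := fun h =>
      x.2 (top_le_iff.mp ((le_of_eq h.symm).trans inf_le_left))
    have hrel : r ⟨x.1 ⊓ z.1, hw⟩ ⟨a.1 ⊓ b.1, hab⟩ := by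
      show box (x.1 ⊓ z.1) ≤ a.1 ⊓ b.1
      rw [hbox_meet]
      exact le_inf (inf_le_left.trans hx) (inf_le_right.trans hz)
    have h1 : IsWellFounded.rank r x ≤ IsWellFounded.rank r ⟨x.1 ⊓ z.1, hw⟩ :=
      IH _ hxa x z hw rfl hzx
    calc Order.succ (IsWellFounded.rank r x)
        ≤ Order.succ (IsWellFounded.rank r ⟨x.1 ⊓ z.1, hw⟩) := Order.succ_le_succ h1
      _ ≤ IsWellFounded.rank r ⟨a.1 ⊓ b.1, hab⟩ :=
          Order.succ_le_of_lt (IsWellFounded.rank_lt_of_rel hrel)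

theorem magari_ht_inf {A : Type u} [BooleanAlgebra A] (box : A → A)
    (hbox_top : box ⊤ = ⊤)
    (hbox_meet : ∀ x y : A, box (x ⊓ y) = box x ⊓ box y)
    (hbox_loeb : ∀ x : A, box (box x ⇨ x) = box x)
    (hwf : WellFounded (fun x y : {a : A // a ≠ ⊤} => box x.1 ≤ y.1))
    (ht : A → WithTop Ordinal.{u})
    (ht_top : ht ⊤ = ⊤)
    (ht_rank : ∀ (a : A) (h : a ≠ ⊤),
      ht a = (@IsWellFounded.rank {a : A // a ≠ ⊤}
        (fun x y => box x.1 ≤ y.1) ⟨hwf⟩ ⟨a, h⟩ : Ordinal.{u}))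
    (a b : A) : ht (a ⊓ b) = min (ht a) (ht b) := by
  letI : IsWellFounded {a : A // a ≠ ⊤} (fun x y => box x.1 ≤ y.1) := ⟨hwf⟩
  set r : {a : A // a ≠ ⊤} → {a : A // a ≠ ⊤} → Prop := fun x y => box x.1 ≤ y.1 with hrdef
  by_cases ha : a = ⊤
  · subst ha
    simp only [top_inf_eq, ht_top]
  by_cases hb : b = ⊤
  · subst hb
    simp only [inf_top_eq, ht_top]
  have hab : a ⊓ b ≠ ⊤ := fun h =>
    ha (top_le_iff.mp ((le_of_eq h.symm).trans inf_le_left))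
  have mono : ∀ (x y : {a : A // a ≠ ⊤}), x.1 ≤ y.1 →
      IsWellFounded.rank r x ≤ IsWellFounded.rank r y := by
    intro x y hxy
    rw [IsWellFounded.rank_eq r x]
    apply Ordinal.iSup_le
    rintro ⟨z, hz⟩
    exact Order.succ_le_of_lt (IsWellFounded.rank_lt_of_rel (le_trans hz hxy))
  have key : IsWellFounded.rank r ⟨a ⊓ b, hab⟩ =
      min (IsWellFounded.rank r ⟨a, ha⟩) (IsWellFounded.rank r ⟨b, hb⟩) := by
    apply le_antisymm
    · exact le_min (mono _ _ inf_le_left) (mono _ _ inf_le_right)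
    · rcases le_total (IsWellFounded.rank r ⟨a, ha⟩) (IsWellFounded.rank r ⟨b, hb⟩) with h | h
      · exact le_trans (min_le_left _ _)
          (magari_aux box hbox_meet hwf _ ⟨a, ha⟩ ⟨b, hb⟩ hab rfl h)
      · have hba : b ⊓ a ≠ ⊤ := fun hh =>
          hb (top_le_iff.mp ((le_of_eq hh.symm).trans inf_le_left))
        have := magari_aux box hbox_meet hwf _ ⟨b, hb⟩ ⟨a, ha⟩ hba rfl h
        have heq : (⟨(⟨b, hb⟩ : {a : A // a ≠ ⊤}).1 ⊓ (⟨a, ha⟩ : {a : A // a ≠ ⊤}).1, hba⟩ :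
            {a : A // a ≠ ⊤}) = ⟨a ⊓ b, hab⟩ := Subtype.ext (inf_comm b a)
        rw [heq] at this
        exact le_trans (min_le_right _ _) this
  rw [ht_rank a ha, ht_rank b hb, ht_rank _ hab, ← WithTop.coe_min, key]
end

section
/- For any □-founded Magari algebra A and any ordinal γ, the set M_A(γ) = { a ∈ A : γ ≤ ht(a) } is a filter of the Boolean algebra A. -/
universe u

theorem magari_height_filter {A : Type u} [BooleanAlgebra A] (box : A → A)
    (hbox_top : box ⊤ = ⊤)
    (hbox_meet : ∀ x y : A, box (x ⊓ y) = box x ⊓ box y)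
    (hbox_loeb : ∀ x : A, box (box x ⇨ x) = box x)
    (hwf : WellFounded (fun x y : {a : A // a ≠ ⊤} => box x.1 ≤ y.1))
    (ht : A → WithTop Ordinal.{u})
    (ht_top : ht ⊤ = ⊤)
    (ht_rank : ∀ (a : A) (h : a ≠ ⊤),
      ht a = (@IsWellFounded.rank {a : A // a ≠ ⊤}
        (fun x y => box x.1 ≤ y.1) ⟨hwf⟩ ⟨a, h⟩ : Ordinal.{u}))
    (gamma : Ordinal.{u}) :
    (gamma : WithTop Ordinal.{u}) ≤ ht ⊤ ∧
    (∀ a b : A, (gamma : WithTop Ordinal.{u}) ≤ ht a → a ≤ b →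
      (gamma : WithTop Ordinal.{u}) ≤ ht b) ∧
    (∀ a b : A, (gamma : WithTop Ordinal.{u}) ≤ ht a →
      (gamma : WithTop Ordinal.{u}) ≤ ht b → (gamma : WithTop Ordinal.{u}) ≤ ht (a ⊓ b)) := by
  set R : {a : A // a ≠ ⊤} → {a : A // a ≠ ⊤} → Prop := fun x y => box x.1 ≤ y.1 with hR
  haveI inst : IsWellFounded {a : A // a ≠ ⊤} R := ⟨hwf⟩
  set rk : {a : A // a ≠ ⊤} → Ordinal.{u} := @IsWellFounded.rank _ R ⟨hwf⟩ with hrk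
  -- characterization of ordinals below a rank
  have hlt : ∀ (c : {a : A // a ≠ ⊤}) (β : Ordinal.{u}), β < rk c →
      ∃ x : {a : A // a ≠ ⊤}, R x c ∧ β ≤ rk x := by
    intro c β hβ
    rw [hrk, IsWellFounded.rank_eq, Ordinal.lt_iSup_iff] at hβ
    obtain ⟨⟨x, hx⟩, h⟩ := hβ
    exact ⟨x, hx, Order.lt_succ_iff.mp h⟩
  have hsucc : ∀ (x c : {a : A // a ≠ ⊤}), R x c → rk x < rk c := by
    intro x c h
    exact IsWellFounded.rank_lt_of_rel h
  -- monotonicity of rank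
  have mono : ∀ (a b : {a : A // a ≠ ⊤}), a.1 ≤ b.1 → rk a ≤ rk b := by
    intro a b hab
    rw [hrk, IsWellFounded.rank_eq, Ordinal.iSup_le_iff]
    rintro ⟨x, hx⟩
    rw [Order.succ_le_iff]
    exact hsucc x b (le_trans hx hab)
  -- key lemma for meets
  have key : ∀ γ' : Ordinal.{u}, ∀ x y : {a : A // a ≠ ⊤}, ∀ hxy : x.1 ⊓ y.1 ≠ ⊤,
      γ' ≤ rk x → γ' ≤ rk y → γ' ≤ rk ⟨x.1 ⊓ y.1, hxy⟩ := by
    intro γ'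
    induction γ' using Ordinal.induction with
    | h γ' IH =>
      intro x y hxy hx hy
      refine le_of_forall_lt fun β hβ => ?_
      obtain ⟨u, hu, hu2⟩ := hlt x β (lt_of_lt_of_le hβ hx)
      obtain ⟨v, hv, hv2⟩ := hlt y β (lt_of_lt_of_le hβ hy)
      have huv : u.1 ⊓ v.1 ≠ ⊤ := by
        intro h
        apply u.2
        have h2 : u.1 ⊓ v.1 ≤ u.1 := inf_le_left
        rw [h] at h2
        exact top_le_iff.mp h2
      have hβuv : β ≤ rk ⟨u.1 ⊓ v.1, huv⟩ := IH β hβ u v huv hu2 hv2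
      have hrel : R ⟨u.1 ⊓ v.1, huv⟩ ⟨x.1 ⊓ y.1, hxy⟩ := by
        show box (u.1 ⊓ v.1) ≤ x.1 ⊓ y.1
        rw [hbox_meet]
        exact inf_le_inf hu hv
      exact lt_of_le_of_lt hβuv (hsucc _ _ hrel)
  refine ⟨?_, ?_, ?_⟩
  · rw [ht_top]; exact le_top
  · intro a b ha hab
    by_cases hb : b = ⊤
    · rw [hb, ht_top]; exact le_top
    · have ha' : a ≠ ⊤ := by
        intro h; apply hb; rw [h] at hab; exact top_le_iff.mp hab
      rw [ht_rank a ha'] at ha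
      rw [ht_rank b hb]
      exact le_trans ha (WithTop.coe_le_coe.mpr (mono ⟨a, ha'⟩ ⟨b, hb⟩ hab))
  · intro a b ha hb
    by_cases ha' : a = ⊤
    · subst ha'; rw [top_inf_eq]; exact hb
    by_cases hb' : b = ⊤
    · subst hb'; rw [inf_top_eq]; exact ha
    have hab : a ⊓ b ≠ ⊤ := by
      intro h; apply ha'
      have h2 : a ⊓ b ≤ a := inf_le_left
      rw [h] at h2
      exact top_le_iff.mp h2
    rw [ht_rank a ha'] at ha
    rw [ht_rank b hb'] at hb
    rw [ht_rank _ hab]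
    exact_mod_cast key gamma ⟨a, ha'⟩ ⟨b, hb'⟩ hab (WithTop.coe_le_coe.mp ha)
      (WithTop.coe_le_coe.mp hb)
end

section
/- Let A be a □-founded Magari algebra and F a filter of A with F ⊆ { a : □a = 1 }. Then F is an open filter (□a ∈ F whenever a ∈ F), and the quotient Magari algebra A/F is again □-founded. -/
theorem quotient_box_founded {A : Type*} [BooleanAlgebra A] (box : A → A)
    (hbox_top : box ⊤ = ⊤)
    (hbox_meet : ∀ x y : A, box (x ⊓ y) = box x ⊓ box y)
    (hbox_loeb : ∀ x : A, box (box x ⇨ x) = box x)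
    (hfound : ∀ a : ℕ → A, (∀ i : ℕ, box (a (i + 1)) ≤ a i) → a 0 = ⊤)
    (F : Set A)
    (hF_top : (⊤ : A) ∈ F)
    (hF_up : ∀ a b : A, a ∈ F → a ≤ b → b ∈ F)
    (hF_inf : ∀ a b : A, a ∈ F → b ∈ F → a ⊓ b ∈ F)
    (hF_box : F ⊆ {a : A | box a = ⊤}) :
    (∀ a : A, a ∈ F → box a ∈ F) ∧
    (∀ a : ℕ → A, (∀ i : ℕ, (box (a (i + 1)) ⇨ a i) ∈ F) → a 0 ∈ F) := by
  have hmono : ∀ x y : A, x ≤ y → box x ≤ box y := by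
    intro x y h
    calc box x = box x ⊓ box y := by rw [← hbox_meet, inf_eq_left.mpr h]
    _ ≤ box y := inf_le_right
  constructor
  · intro a ha
    have : box a = ⊤ := hF_box ha
    rw [this]; exact hF_top
  · intro a ha
    set g : ℕ → A := fun i => box (a (i + 1)) ⇨ a i with hg
    have hgF : ∀ i, g i ∈ F := ha
    have hgbox : ∀ i, box (g i) = ⊤ := fun i => hF_box (hgF i)
    set e : ℕ → A := fun i => g i ⇨ a i with he
    have key : ∀ i, box (e (i + 1)) ≤ e i := by
      intro i
      have h1 : box (e (i + 1)) ≤ box (a (i + 1)) := by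
        have hle : g (i + 1) ⊓ e (i + 1) ≤ a (i + 1) := inf_himp_le
        calc box (e (i + 1)) = box (g (i + 1)) ⊓ box (e (i + 1)) := by
              rw [hgbox, top_inf_eq]
        _ = box (g (i + 1) ⊓ e (i + 1)) := (hbox_meet _ _).symm
        _ ≤ box (a (i + 1)) := hmono _ _ hle
      have h2 : box (a (i + 1)) ≤ e i := le_himp_iff.mpr inf_himp_le
      exact h1.trans h2
    have he0 : e 0 = ⊤ := hfound e key
    have hle : g 0 ≤ a 0 := by
      have := he0
      rwa [he, himp_eq_top_iff] at this
    exact hF_up _ _ (hgF 0) hle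
end

section
/- If (X, τ) is a scattered topological space, then the powerset Boolean algebra P(X) with the co-derived-set operator cd_τ forms a Magari algebra; in particular cd_τ(cd_τ(V) → V) = cd_τ(V) for all V ⊆ X, where → is Boolean implication (complement and union). -/
def Scattered (X : Type*) (t : TopologicalSpace X) : Prop :=
  ∀ S : Set X, S.Nonempty → ∃ x ∈ S, ∃ U : Set X, t.IsOpen U ∧ U ∩ S = {x}

def cd {X : Type*} (t : TopologicalSpace X) (V : Set X) : Set X :=
  {x | ∃ U : Set X, t.IsOpen U ∧ x ∈ U ∧ U \ {x} ⊆ V}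

theorem scattered_cd_magari {X : Type*} (t : TopologicalSpace X) (hs : Scattered X t) :
    cd t (Set.univ : Set X) = Set.univ ∧
    (∀ V W : Set X, cd t (V ∩ W) = cd t V ∩ cd t W) ∧
    (∀ V : Set X, cd t (cd t V ⇨ V) = cd t V) := by
  refine ⟨?_, ?_, ?_⟩
  · ext x
    simp only [cd, Set.mem_setOf_eq, Set.mem_univ, iff_true]
    exact ⟨Set.univ, t.isOpen_univ, trivial, fun _ _ => trivial⟩
  · intro V W
    ext x
    constructor
    · rintro ⟨U, hU, hxU, hsub⟩
      exact ⟨⟨U, hU, hxU, fun y hy => (hsub hy).1⟩, ⟨U, hU, hxU, fun y hy => (hsub hy).2⟩⟩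
    · rintro ⟨⟨U1, hU1, hx1, hs1⟩, ⟨U2, hU2, hx2, hs2⟩⟩
      exact ⟨U1 ∩ U2, t.isOpen_inter U1 U2 hU1 hU2, ⟨hx1, hx2⟩,
        fun y hy => ⟨hs1 ⟨hy.1.1, hy.2⟩, hs2 ⟨hy.1.2, hy.2⟩⟩⟩
  · intro V
    ext x
    constructor
    · rintro ⟨U, hU, hxU, hsub⟩
      by_contra hx
      -- A : points of U not in cd t V
      set A : Set X := {y | y ∈ U ∧ y ∉ cd t V} with hA
      have hAne : A.Nonempty := ⟨x, hxU, hx⟩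
      obtain ⟨y, hyA, W, hW, hWA⟩ := hs A hAne
      have hyU : y ∈ U := hyA.1
      have hyW : y ∈ W := by
        have : y ∈ W ∩ A := by rw [hWA]; rfl
        exact this.1
      apply hyA.2
      refine ⟨U ∩ W, t.isOpen_inter U W hU hW, ⟨hyU, hyW⟩, ?_⟩
      rintro z ⟨⟨hzU, hzW⟩, hzy⟩
      have hzcd : z ∈ cd t V := by
        by_contra hzc
        have : z ∈ W ∩ A := ⟨hzW, hzU, hzc⟩
        rw [hWA] at this
        exact hzy this
      have hzx : z ≠ x := by
        rintro rfl
        exact hx hzcd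
      have := hsub ⟨hzU, hzx⟩
      rw [himp_eq] at this
      have h2 : z ∈ V ∪ (cd t V)ᶜ := this
      exact h2.resolve_right (fun h => h hzcd)
    · rintro ⟨U, hU, hxU, hsub⟩
      refine ⟨U, hU, hxU, fun y hy => ?_⟩
      rw [himp_eq]
      exact Set.mem_union_left _ (hsub hy)
end

section
/- A Magari algebra is □-founded if and only if it is embeddable into the powerset Magari algebra of some scattered topological space (with □ interpreted as the co-derived-set operator cd_τ). -/
universe u

/-!
In a scattered space, a point isolated in `⋃ i, (S i)ᶜ` and missing `S i` lies in `cd (S (i + 1))`,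
so `cd` is `□`-founded; foundedness passes to subalgebras.

Conversely, encode ultrafilters as Boolean homomorphisms `v : A → Prop`. An ultrafilter `v` is
admitted at stage `α` if `□b ∈ v`, together with `b ∧ □b ∧ ¬a` lying in no ultrafilter admitted
earlier, forces `□a ∈ v`. The admitted ultrafilters, ranked by their first stage, form the space;
a neighbourhood of `v` is `v` together with the lower-ranked points containing `c ∧ □c`, for
`□c ∈ v`. The admission rule is exactly what makes `cd` agree with `□`. The elements lying in no
admitted ultrafilter form a set in which each element is below `◇` of another one (compactness via
the prime ideal theorem, plus `□b ∧ □¬(b ∧ □b ∧ ¬a) ≤ □a`); `□`-foundedness forbids such infinite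
`◇`-chains, so only `⊥` lies in no point and the representation is injective.
-/

open Set Function Order

namespace Magari

variable {A : Type u} [BooleanAlgebra A]

def IsBoxFounded {B : Type*} [BooleanAlgebra B] (box : B → B) : Prop :=
  ∀ a : ℕ → B, (∀ i : ℕ, box (a (i + 1)) ≤ a i) → a 0 = ⊤

def dia (box : A → A) (a : A) : A := (box aᶜ)ᶜ

section Algebra

variable {box : A → A}

theorem dia_mono (hmeet : ∀ x y : A, box (x ⊓ y) = box x ⊓ box y) : Monotone (dia box) :=
  fun _ _ h => compl_le_compl (Monotone.of_map_inf hmeet (compl_le_compl h))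

theorem box_le_box_box (hmeet : ∀ x y : A, box (x ⊓ y) = box x ⊓ box y)
    (hloeb : ∀ x : A, box (box x ⇨ x) = box x) (a : A) : box a ≤ box (box a) := by
  have hmono := Monotone.of_map_inf hmeet
  have h : a ≤ box (a ⊓ box a) ⇨ a ⊓ box a :=
    le_himp_iff.2 (le_inf inf_le_left (inf_le_right.trans (hmono inf_le_left)))
  calc box a ≤ box (box (a ⊓ box a) ⇨ a ⊓ box a) := hmono h
    _ = box a ⊓ box (box a) := by rw [hloeb, hmeet]
    _ ≤ box (box a) := inf_le_right

theorem box_inf_box_compl_le (hmeet : ∀ x y : A, box (x ⊓ y) = box x ⊓ box y)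
    (hloeb : ∀ x : A, box (box x ⇨ x) = box x) (a b : A) :
    box b ⊓ box (b ⊓ box b ⊓ aᶜ)ᶜ ≤ box a := by
  have h : b ⊓ box b ⊓ (b ⊓ box b ⊓ aᶜ)ᶜ ≤ a := by
    rw [compl_inf, compl_compl, inf_sup_left, inf_compl_self, bot_sup_eq]
    exact inf_le_right
  calc box b ⊓ box (b ⊓ box b ⊓ aᶜ)ᶜ ≤ box (b ⊓ box b) ⊓ box (b ⊓ box b ⊓ aᶜ)ᶜ := by
        rw [hmeet b]
        exact inf_le_inf_right _ (le_inf le_rfl (box_le_box_box hmeet hloeb b))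
    _ = box (b ⊓ box b ⊓ (b ⊓ box b ⊓ aᶜ)ᶜ) := (hmeet _ _).symm
    _ ≤ box a := Monotone.of_map_inf hmeet h

theorem IsBoxFounded.eq_bot_of_forall_exists_le_dia (hf : IsBoxFounded box) {N : Set A}
    (hN : ∀ d ∈ N, ∃ d' ∈ N, d ≤ dia box d') {d : A} (hd : d ∈ N) : d = ⊥ := by
  choose! next hnext_mem hle_next using hN
  have hchain_mem : ∀ n, next^[n] d ∈ N := fun n => by
    induction n with
    | zero => exact hd
    | succ n ih => rw [iterate_succ_apply']; exact hnext_mem _ ih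
  have hchain : ∀ i, box (next^[i + 1] d)ᶜ ≤ (next^[i] d)ᶜ := fun i => by
    rw [iterate_succ_apply']
    exact le_compl_comm.1 (hle_next _ (hchain_mem i))
  exact compl_eq_top.1 (hf (fun n => (next^[n] d)ᶜ) hchain)

theorem IsBoxFounded.of_injective {B : Type*} [BooleanAlgebra B] {boxB : B → B}
    (hB : IsBoxFounded boxB) (f : A → B) (hf : Injective f) (hf_top : f ⊤ = ⊤)
    (hf_inf : ∀ a b : A, f (a ⊓ b) = f a ⊓ f b) (hf_box : ∀ a : A, f (box a) = boxB (f a)) :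
    IsBoxFounded box := fun a ha =>
  hf <| (hB (f ∘ a) fun i => hf_box (a (i + 1)) ▸ Monotone.of_map_inf hf_inf (ha i)).trans
    hf_top.symm

end Algebra

theorem _root_.Scattered.isBoxFounded_cd {X : Type*} {t : TopologicalSpace X}
    (ht : Scattered X t) : IsBoxFounded (cd t) := by
  intro S hS
  by_contra hS0
  obtain ⟨x₀, hx₀⟩ := (ne_univ_iff_exists_notMem _).1 hS0
  obtain ⟨x, hx, U, hU, hUS⟩ := ht (⋃ i, (S i)ᶜ) ⟨x₀, mem_iUnion.2 ⟨0, hx₀⟩⟩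
  obtain ⟨i, hxi⟩ := mem_iUnion.1 hx
  have hxU : x ∈ U := (hUS.symm.subset (mem_singleton x)).1
  refine hxi (hS i ⟨U, hU, hxU, fun y ⟨hyU, hyx⟩ => ?_⟩)
  by_contra hy
  exact hyx (hUS.subset ⟨hyU, mem_iUnion.2 ⟨i + 1, hy⟩⟩)

section Ultrafilter

def homOfIsPrime {J : Ideal A} (hJ : J.IsPrime) : BoundedLatticeHom A Prop where
  toFun a := a ∉ J
  map_sup' _ _ := propext <| Ideal.sup_mem_iff.not.trans not_and_or
  map_inf' _ _ := propext <| (not_congr ⟨hJ.mem_or_mem,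
    fun h => h.elim (J.lower inf_le_left) (J.lower inf_le_right)⟩).trans not_or
  map_top' := eq_true hJ.top_notMem
  map_bot' := eq_false (not_not.2 J.bot_mem)

theorem exists_boundedLatticeHom_of_notMem {I : Set A} (hI : IsIdeal I) {d : A} (hd : d ∉ I) :
    ∃ v : BoundedLatticeHom A Prop, v d ∧ ∀ e ∈ I, ¬ v e := by
  have hdisj : Disjoint (PFilter.principal d : Set A) (hI.toIdeal : Set A) :=
    disjoint_left.2 fun e hde heI => hd (hI.IsLowerSet (PFilter.mem_principal.1 hde) heI)
  obtain ⟨J, hJ, hIJ, hdJ⟩ := DistribLattice.prime_ideal_of_disjoint_filter_ideal hdisj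
  exact ⟨homOfIsPrime hJ, disjoint_left.1 hdJ (PFilter.mem_principal.2 le_rfl),
    fun e he => not_not.2 (hIJ he)⟩

end Ultrafilter

section Space

variable (box : A → A)

def stage (α : Ordinal.{u}) : Set (BoundedLatticeHom A Prop) :=
  {v | ∀ b a : A, v (box b) → (∀ β < α, ∀ w ∈ stage β, ¬ w (b ⊓ box b ⊓ aᶜ)) → v (box a)}
termination_by α

def Point : Type u := {v : BoundedLatticeHom A Prop // ∃ α, v ∈ stage box α}

def toSet (a : A) : Set (Point box) := {x | x.1 a}

variable {box}

noncomputable def rank (x : Point box) : Ordinal.{u} := sInf {α | x.1 ∈ stage box α}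

theorem mem_stage_rank (x : Point box) : x.1 ∈ stage box (rank x) := csInf_mem x.2

theorem mem_stage_iff {v : BoundedLatticeHom A Prop} {α : Ordinal.{u}} :
    v ∈ stage box α ↔ ∀ b a : A, v (box b) →
      (∀ x : Point box, rank x < α → ¬ x.1 (b ⊓ box b ⊓ aᶜ)) → v (box a) := by
  rw [stage]
  refine forall₃_congr fun b a _ => imp_congr_left ⟨fun h x hx => h _ hx x.1 (mem_stage_rank x),
    fun h β hβ w hw => h ⟨w, β, hw⟩ ((csInf_le' (s := {α | w ∈ stage box α}) hw).trans_lt hβ)⟩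

theorem toSet_top : toSet box ⊤ = univ := eq_univ_of_forall fun x => by simp [toSet]

theorem toSet_inf (a b : A) : toSet box (a ⊓ b) = toSet box a ∩ toSet box b := by
  ext x; simp [toSet]

theorem toSet_compl (a : A) : toSet box aᶜ = (toSet box a)ᶜ := by
  ext x; simp [toSet]

theorem toSet_bot : toSet box ⊥ = ∅ := by
  ext x; simp [toSet]

theorem toSet_sup (a b : A) : toSet box (a ⊔ b) = toSet box a ∪ toSet box b := by
  ext x; simp [toSet]

theorem exists_toSet_eq_empty_and_dia (hmeet : ∀ x y : A, box (x ⊓ y) = box x ⊓ box y)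
    (hloeb : ∀ x : A, box (box x ⇨ x) = box x) {v : BoundedLatticeHom A Prop}
    (hv : ∀ α, v ∉ stage box α) : ∃ c, toSet box c = ∅ ∧ v (dia box c) := by
  obtain ⟨Λ, hΛ⟩ := Ordinal.bddAbove_of_small (s := range (rank (box := box)))
  have := hv (succ Λ)
  rw [mem_stage_iff] at this
  push Not at this
  obtain ⟨b, a, hb, hnull, ha⟩ := this
  refine ⟨b ⊓ box b ⊓ aᶜ,
    eq_empty_of_forall_notMem fun x => hnull x (lt_succ_of_le (hΛ ⟨x, rfl⟩)), ?_⟩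
  rw [dia, map_compl']
  intro hc
  refine ha (OrderHomClass.mono v (box_inf_box_compl_le hmeet hloeb a b) ?_)
  rw [map_inf]
  exact ⟨hb, hc⟩

theorem exists_le_dia_of_toSet_eq_empty (hmeet : ∀ x y : A, box (x ⊓ y) = box x ⊓ box y)
    (hloeb : ∀ x : A, box (box x ⇨ x) = box x) {d : A} (hd : toSet box d = ∅) :
    ∃ d', toSet box d' = ∅ ∧ d ≤ dia box d' := by
  set I : Set A := {e | ∃ c, toSet box c = ∅ ∧ e ≤ dia box c}
  have hI : IsIdeal I := by
    refine ⟨fun e e' hle ⟨c, hc, he⟩ => ⟨c, hc, hle.trans he⟩, ⟨⊥, ⊥, toSet_bot, bot_le⟩, ?_⟩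
    rintro e ⟨c, hc, he⟩ e' ⟨c', hc', he'⟩
    have hsup : toSet box (c ⊔ c') = ∅ := by rw [toSet_sup, hc, hc', empty_union]
    exact ⟨_, ⟨c ⊔ c', hsup, le_rfl⟩, he.trans (dia_mono hmeet le_sup_left),
      he'.trans (dia_mono hmeet le_sup_right)⟩
  by_contra h
  obtain ⟨v, hvd, hvI⟩ := exists_boundedLatticeHom_of_notMem hI h
  have hv : ∀ α, v ∉ stage box α := fun α hvα =>
    (eq_empty_iff_forall_notMem.1 hd) ⟨v, α, hvα⟩ hvd
  obtain ⟨c, hc, hvc⟩ := exists_toSet_eq_empty_and_dia hmeet hloeb hv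
  exact hvI _ ⟨c, hc, le_rfl⟩ hvc

theorem IsBoxFounded.eq_bot_of_toSet_eq_empty (hf : IsBoxFounded box)
    (hmeet : ∀ x y : A, box (x ⊓ y) = box x ⊓ box y) (hloeb : ∀ x : A, box (box x ⇨ x) = box x)
    {d : A} (hd : toSet box d = ∅) : d = ⊥ :=
  hf.eq_bot_of_forall_exists_le_dia (N := {d | toSet box d = ∅})
    (fun _ hd => exists_le_dia_of_toSet_eq_empty hmeet hloeb hd) hd

theorem toSet_injective (hker : ∀ d : A, toSet box d = ∅ → d = ⊥) : Injective (toSet box) := by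
  have hle : ∀ {a b : A}, toSet box a = toSet box b → a ≤ b := fun h => by
    refine disjoint_compl_right_iff.1 (disjoint_iff.2 (hker _ ?_))
    rw [toSet_inf, toSet_compl, h, inter_compl_self]
  exact fun a b h => le_antisymm (hle h) (hle h.symm)

def basicOpen (x : Point box) (c : A) : Set (Point box) :=
  {y | y = x ∨ rank y < rank x ∧ y.1 (c ⊓ box c)}

theorem basicOpen_mono (hmeet : ∀ x y : A, box (x ⊓ y) = box x ⊓ box y) (x : Point box)
    {c c' : A} (h : c ≤ c') : basicOpen x c ⊆ basicOpen x c' :=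
  fun y hy => hy.imp_right fun hy =>
    ⟨hy.1, OrderHomClass.mono y.1 (inf_le_inf h (Monotone.of_map_inf hmeet h)) hy.2⟩

theorem basicOpen_subset_basicOpen {x y : Point box} {c : A} (hy : y ∈ basicOpen x c) :
    basicOpen y c ⊆ basicOpen x c := by
  rcases hy with rfl | ⟨hyx, hyc⟩
  · exact subset_rfl
  · rintro z (rfl | ⟨hzy, hzc⟩)
    · exact Or.inr ⟨hyx, hyc⟩
    · exact Or.inr ⟨hzy.trans hyx, hzc⟩

variable (box) in
abbrev topology (htop : box ⊤ = ⊤) (hmeet : ∀ x y : A, box (x ⊓ y) = box x ⊓ box y) :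
    TopologicalSpace (Point box) where
  IsOpen U := ∀ x ∈ U, ∃ c, x.1 (box c) ∧ basicOpen x c ⊆ U
  isOpen_univ x _ := ⟨⊤, by simp [htop], subset_univ _⟩
  isOpen_inter U W hU hW x hx := by
    obtain ⟨c, hc, hcU⟩ := hU x hx.1
    obtain ⟨c', hc', hc'W⟩ := hW x hx.2
    refine ⟨c ⊓ c', by simpa [hmeet] using ⟨hc, hc'⟩, subset_inter ?_ ?_⟩
    · exact (basicOpen_mono hmeet x inf_le_left).trans hcU
    · exact (basicOpen_mono hmeet x inf_le_right).trans hc'W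
  isOpen_sUnion S hS x hx := by
    obtain ⟨U, hUS, hxU⟩ := hx
    obtain ⟨c, hc, hcU⟩ := hS U hUS x hxU
    exact ⟨c, hc, hcU.trans (subset_sUnion_of_mem hUS)⟩

variable {htop : box ⊤ = ⊤} {hmeet : ∀ x y : A, box (x ⊓ y) = box x ⊓ box y}

theorem isOpen_basicOpen {x : Point box} {c : A} (hc : x.1 (box c)) :
    (topology box htop hmeet).IsOpen (basicOpen x c) := by
  intro y hy
  refine ⟨c, ?_, basicOpen_subset_basicOpen hy⟩
  rcases hy with rfl | ⟨-, hyc⟩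
  · exact hc
  · exact OrderHomClass.mono y.1 inf_le_right hyc

theorem scattered_topology : Scattered (Point box) (topology box htop hmeet) := by
  intro S hS
  obtain ⟨x, hxS, hmin⟩ := (InvImage.wf rank wellFounded_lt).has_min S hS
  refine ⟨x, hxS, basicOpen x ⊤, isOpen_basicOpen (by simp [htop]), ?_⟩
  ext y
  constructor
  · rintro ⟨rfl | ⟨hyx, -⟩, hyS⟩
    · rfl
    · exact absurd hyx (hmin y hyS)
  · rintro rfl
    exact ⟨Or.inl rfl, hxS⟩

theorem cd_toSet (a : A) : cd (topology box htop hmeet) (toSet box a) = toSet box (box a) := by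
  ext x
  constructor
  · rintro ⟨U, hU, hxU, hUa⟩
    obtain ⟨c, hc, hcU⟩ := hU x hxU
    refine mem_stage_iff.1 (mem_stage_rank x) c a hc fun y hyx hy => ?_
    have hya : y.1 a := hUa ⟨hcU (Or.inr ⟨hyx, OrderHomClass.mono y.1 inf_le_left hy⟩),
      fun h => hyx.ne (congrArg rank h)⟩
    have hyac : y.1 aᶜ := OrderHomClass.mono y.1 inf_le_right hy
    rw [map_compl'] at hyac
    exact hyac hya
  · intro hx
    refine ⟨basicOpen x a, isOpen_basicOpen hx, Or.inl rfl, fun y ⟨hy, hyx⟩ => ?_⟩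
    exact OrderHomClass.mono y.1 inf_le_left (hy.resolve_left hyx).2

end Space

end Magari

open Magari in
theorem box_founded_iff_embeddable {A : Type u} [BooleanAlgebra A] (box : A → A)
    (hbox_top : box ⊤ = ⊤)
    (hbox_meet : ∀ x y : A, box (x ⊓ y) = box x ⊓ box y)
    (hbox_loeb : ∀ x : A, box (box x ⇨ x) = box x) :
    (∀ a : ℕ → A, (∀ i : ℕ, box (a (i + 1)) ≤ a i) → a 0 = ⊤) ↔
      ∃ (X : Type u) (t : TopologicalSpace X), Scattered X t ∧
        ∃ f : A → Set X, Function.Injective f ∧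
          f ⊤ = Set.univ ∧
          (∀ a b : A, f (a ⊓ b) = f a ∩ f b) ∧
          (∀ a : A, f aᶜ = (f a)ᶜ) ∧
          (∀ a : A, f (box a) = cd t (f a)) := by
  constructor
  · intro hf
    exact ⟨Point box, topology box hbox_top hbox_meet, scattered_topology, toSet box,
      toSet_injective fun _ => IsBoxFounded.eq_bot_of_toSet_eq_empty hf hbox_meet hbox_loeb,
      toSet_top, toSet_inf, toSet_compl, fun a => (cd_toSet a).symm⟩
  · rintro ⟨X, t, ht, f, hf, hf_top, hf_inf, -, hf_box⟩
    exact ht.isBoxFounded_cd.of_injective f hf hf_top hf_inf hf_box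
end
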